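/- arXiv:1706.08330 — 2 statements merged into one kernel-verified Lean document; each statement's English description precedes it below -/
import Mathlib

section
/- Let G be a graph with an end ω of vertex degree k. For each ω-relevant separation (A,B) there are only finitely many ω-relevant separations (C,D) that are not nested with (A,B). -/
open Set Cardinal

namespace PaperEnds

/-- A ray in `G`: a one-sided infinite path, i.e. an injective sequence of
pairwise adjacent consecutive vertices. -/
def IsRay {V : Type} (G : SimpleGraph V) (r : ℕ → V) : Prop :=
  Function.Injective r ∧ ∀ n, G.Adj (r n) (r (n + 1))

/-- `a` and `b` are connected by a walk avoiding the vertex set `S`. -/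
def ReachableOutside {V : Type} (G : SimpleGraph V) (S : Set V) (a b : V) : Prop :=
  ∃ w : G.Walk a b, ∀ v ∈ w.support, v ∉ S

/-- Two rays are equivalent (belong to the same end) if for every finite vertex
set `S` they have tails lying in the same component of `G − S`. -/
def RayEquiv {V : Type} (G : SimpleGraph V) (r₁ r₂ : ℕ → V) : Prop :=
  ∀ S : Set V, S.Finite → ∃ m n : ℕ,
    (∀ i, m ≤ i → r₁ i ∉ S) ∧ (∀ j, n ≤ j → r₂ j ∉ S) ∧
    ReachableOutside G S (r₁ m) (r₂ n)

/-- `r` is a ray belonging to the end represented by the ray `ω`. -/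
def InEnd {V : Type} (G : SimpleGraph V) (ω r : ℕ → V) : Prop :=
  IsRay G r ∧ RayEquiv G r ω

/-- `G` has exactly one end: it has a ray and any two rays are equivalent. -/
def OneEnded {V : Type} (G : SimpleGraph V) : Prop :=
  (∃ r, IsRay G r) ∧ ∀ r₁ r₂, IsRay G r₁ → IsRay G r₂ → RayEquiv G r₁ r₂

/-- A family of pairwise (vertex-)disjoint rays. -/
def DisjointRays {V : Type} {ι : Type} (f : ι → ℕ → V) : Prop :=
  Pairwise fun i j => Disjoint (Set.range (f i)) (Set.range (f j))

/-- The end represented by `ω` has vertex degree `k`: the maximum cardinality of a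
family of pairwise disjoint rays belonging to the end is `k`. -/
def EndVertexDegree {V : Type} (G : SimpleGraph V) (ω : ℕ → V) (k : ℕ) : Prop :=
  (∃ f : Fin k → ℕ → V, (∀ i, InEnd G ω (f i)) ∧ DisjointRays f) ∧
  ¬ ∃ f : Fin (k + 1) → ℕ → V, (∀ i, InEnd G ω (f i)) ∧ DisjointRays f

/-- `v` dominates the end represented by `ω`: for every ray `r` in the end there are
infinitely many `v`–`r` paths pairwise meeting only in `v`. -/
def Dominates {V : Type} (G : SimpleGraph V) (v : V) (ω : ℕ → V) : Prop :=
  ∀ r : ℕ → V, InEnd G ω r →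
    ∃ (t : ℕ → ℕ) (P : (n : ℕ) → G.Walk v (r (t n))),
      Function.Injective t ∧
      (∀ n, (P n).IsPath) ∧
      (∀ n, ∀ u ∈ (P n).support, u ∈ Set.range r → u = r (t n)) ∧
      (∀ m n, m ≠ n → ∀ u, u ∈ (P m).support → u ∈ (P n).support → u = v)

/-- The end represented by `ω` is undominated. -/
def Undominated {V : Type} (G : SimpleGraph V) (ω : ℕ → V) : Prop :=
  ¬ ∃ v, Dominates G v ω

/-- `(A, B)` is a separation of `G`. -/
def IsSeparation {V : Type} (G : SimpleGraph V) (A B : Set V) : Prop :=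
  A ∪ B = Set.univ ∧ ∀ a ∈ A \ B, ∀ b ∈ B \ A, ¬ G.Adj a b

/-- The order of a separation `(A, B)`, i.e. `|A ∩ B|` as an extended natural number. -/
noncomputable def SepOrder {V : Type} (A B : Set V) : ℕ∞ := (A ∩ B).encard

/-- The end represented by `ω` lies in the side `B`: every ray of the end has all
but finitely many vertices in `B`. -/
def LiesIn {V : Type} (G : SimpleGraph V) (ω : ℕ → V) (B : Set V) : Prop :=
  ∀ r, InEnd G ω r → ∃ m, ∀ n, m ≤ n → r n ∈ B

/-- The vertex set `s` is connected in `G` (any two of its vertices are joined by a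
walk inside `s`). -/
def ConnectedIn {V : Type} (G : SimpleGraph V) (s : Set V) : Prop :=
  ∀ a ∈ s, ∀ b ∈ s, ∃ w : G.Walk a b, ∀ v ∈ w.support, v ∈ s

/-- `(A, B)` is an ω-relevant separation (for the end of vertex degree `k`
represented by the ray `ω`). -/
def Relevant {V : Type} (G : SimpleGraph V) (ω : ℕ → V) (k : ℕ) (A B : Set V) : Prop :=
  IsSeparation G A B ∧ SepOrder A B = (k : ℕ∞) ∧
  ConnectedIn G (A \ B) ∧
  (∀ v ∈ A ∩ B, ∃ u ∈ A \ B, G.Adj v u) ∧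
  LiesIn G ω B ∧
  ¬ ∃ C D : Set V, IsSeparation G C D ∧ SepOrder C D < (k : ℕ∞) ∧ A ⊆ C ∧ LiesIn G ω D

/-- Two separations `(A, B)` and `(C, D)` are nested. -/
def Nested {V : Type} (A B C D : Set V) : Prop :=
  (A ⊆ C ∧ D ⊆ B) ∨ (A ⊆ D ∧ C ⊆ B) ∨ (B ⊆ C ∧ D ⊆ A) ∨ (B ⊆ D ∧ C ⊆ A)

/-!
Suppose infinitely many relevant separations `(C, D)` cross `(A, B)`. Each of them has a vertex
of the finite set `A ∩ B` in `C \ D`, so one vertex `x` does this for infinitely many, and a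
relevant separation is determined by its separator together with a vertex of `C \ D`. By the
sunflower lemma, infinitely many of the separators (all of size `k`) share a kernel `Y` and
have pairwise disjoint nonempty petals. A path from `x` avoiding `Y` meets the petal of every
member whose `C` it leaves, hence leaves only finitely many `C`. If `Y = ∅`, this contradicts
the minimality in the definition of relevance, which forces every crossing `C` to miss some
vertex of `A ∩ B`, and all of these are joined to `x`. If `Y ≠ ∅`, minimality puts the end into
the component of `G - Y` containing `x`; then some member has the start vertices of `k` disjoint
rays of the end in `C \ D`, and these rays cross its separator in `k` vertices outside `Y`,
too many for a separator of order `k` that also contains `Y`.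
-/

section

theorem _root_.Set.Infinite.exists_infinite_sep_of_finite {α β : Type*} {J : Set α} {I : Set β}
    {P : β → α → Prop} (hJ : J.Infinite) (hI : I.Finite) (h : ∀ j ∈ J, ∃ i ∈ I, P i j) :
    ∃ i ∈ I, {j ∈ J | P i j}.Infinite := by
  by_contra! hfin
  refine hJ ((hI.biUnion hfin).subset fun j hj => ?_)
  obtain ⟨i, hi, hij⟩ := h j hj
  exact mem_biUnion hi ⟨hj, hij⟩

theorem _root_.Set.PairwiseDisjoint.subsingleton_sep_mem {ι α : Type*} {J : Set ι} {f : ι → Set α}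
    (h : J.PairwiseDisjoint f) (a : α) : {j ∈ J | a ∈ f j}.Subsingleton :=
  fun _ hi _ hj => h.elim_set hi.1 hj.1 a hi.2 hj.2

theorem exists_infinite_pairwiseDisjoint {ι α : Type*} (S : ι → Set α) {J : Set ι}
    (hJ : J.Infinite) (hS : ∀ j ∈ J, (S j).Finite) (hpt : ∀ a, {j ∈ J | a ∈ S j}.Finite) :
    ∃ J' ⊆ J, J'.Infinite ∧ J'.PairwiseDisjoint S := by
  let R : ι → ι → Prop := fun i j => i ≠ j ∧ Disjoint (S i) (S j)
  have : Std.Symm R := ⟨fun _ _ h => ⟨h.1.symm, h.2.symm⟩⟩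
  obtain ⟨f, hfJ, hf⟩ := exists_seq_of_forall_finset_exists' (· ∈ J) R fun s hs => by
      have hbad : (↑s ∪ ⋃ i ∈ s, ⋃ a ∈ S i, {j ∈ J | a ∈ S j}).Finite :=
        s.finite_toSet.union <| s.finite_toSet.biUnion fun i hi => (hS i (hs i hi)).biUnion
          fun a _ => hpt a
      obtain ⟨j, hj, hjbad⟩ := hJ.exists_notMem_finite hbad
      refine ⟨j, hj, fun i hi => ⟨fun hij => hjbad (Or.inl (hij ▸ hi)), ?_⟩⟩
      refine Set.disjoint_left.2 fun a hai haj => hjbad (Or.inr ?_)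
      simp only [mem_iUnion]
      exact ⟨i, hi, a, hai, hj, haj⟩
  have hinj : f.Injective := fun m n hmn => by_contra fun hne => (hf hne).1 hmn
  refine ⟨range f, range_subset_iff.2 hfJ, infinite_range_of_injective hinj, ?_⟩
  rintro _ ⟨m, rfl⟩ _ ⟨n, rfl⟩ hne
  exact (hf (ne_of_apply_ne f hne)).2

theorem exists_infinite_sunflower {ι α : Type*} (k : ℕ) (S : ι → Set α) {J : Set ι}
    (hJ : J.Infinite) (hS : ∀ j ∈ J, (S j).encard ≤ k) :
    ∃ Y, ∃ J' ⊆ J, J'.Infinite ∧ (∀ j ∈ J', Y ⊆ S j) ∧ J'.PairwiseDisjoint (fun j => S j \ Y) := by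
  induction k generalizing S J with
  | zero =>
    have hempty : ∀ j ∈ J, S j = ∅ := fun j hj => encard_eq_zero.1 (nonpos_iff_eq_zero.1 (hS j hj))
    refine ⟨∅, J, subset_rfl, hJ, fun _ _ => empty_subset _, fun i hi j _ _ => ?_⟩
    simp only [Function.onFun, hempty i hi, empty_sdiff, Set.empty_disjoint]
  | succ k ih =>
    by_cases hpt : ∃ a, {j ∈ J | a ∈ S j}.Infinite
    · obtain ⟨a, ha⟩ := hpt
      obtain ⟨Y, J', hJ', hinf, hY, hdisj⟩ := ih (fun j => S j \ {a}) ha fun j hj => by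
        have hle := encard_sdiff_singleton_add_one hj.2 ▸ hS j hj.1
        push_cast at hle
        exact (ENat.add_le_add_iff_right ENat.one_ne_top).1 hle
      refine ⟨insert a Y, J', fun j hj => (hJ' hj).1, hinf, fun j hj => ?_, ?_⟩
      · exact insert_subset (hJ' hj).2 ((hY j hj).trans sdiff_subset)
      · convert hdisj using 2 with j
        rw [insert_eq, sdiff_sdiff, union_comm]
    · push Not at hpt
      obtain ⟨J', hJ', hinf, hdisj⟩ := exists_infinite_pairwiseDisjoint S hJ
        (fun j hj => finite_of_encard_le_coe (hS j hj)) hpt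
      exact ⟨∅, J', hJ', hinf, fun _ _ => empty_subset _, by simpa using hdisj⟩

theorem exists_infinite_sunflower_of_injOn {ι α : Type*} (k : ℕ) (S : ι → Set α) {J : Set ι}
    (hJ : J.Infinite) (hinj : InjOn S J) (hS : ∀ j ∈ J, (S j).encard ≤ k) :
    ∃ Y, ∃ J' ⊆ J, J'.Infinite ∧ (∀ j ∈ J', Y ⊂ S j) ∧ J'.PairwiseDisjoint (fun j => S j \ Y) := by
  obtain ⟨Y, J', hJ', hinf, hY, hdisj⟩ := exists_infinite_sunflower k S hJ hS
  have hcore : {j ∈ J' | S j = Y}.Subsingleton :=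
    fun i hi j hj => hinj (hJ' hi.1) (hJ' hj.1) (hi.2.trans hj.2.symm)
  refine ⟨Y, J' \ {j ∈ J' | S j = Y}, sdiff_subset.trans hJ', hinf.sdiff hcore.finite,
    fun j hj => (hY j hj.1).ssubset_of_ne fun h => hj.2 ⟨hj.1, h.symm⟩, hdisj.subset sdiff_subset⟩

variable {V : Type} {G : SimpleGraph V}

theorem _root_.Function.Injective.exists_forall_notMem {r : ℕ → V} (hr : r.Injective)
    {S : Set V} (hS : S.Finite) : ∃ N, ∀ n ≥ N, r n ∉ S :=
  Filter.eventually_atTop.1 <|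
    Nat.cofinite_eq_atTop ▸ hr.tendsto_cofinite.eventually hS.compl_mem_cofinite

theorem InEnd.self {ω : ℕ → V} (hω : IsRay G ω) : InEnd G ω ω := by
  refine ⟨hω, fun S hS => ?_⟩
  obtain ⟨N, hN⟩ := hω.1.exists_forall_notMem hS
  exact ⟨N, N, hN, hN, .nil, by simpa using hN N le_rfl⟩

theorem EndVertexDegree.ne_zero {ω : ℕ → V} {k : ℕ} (hdeg : EndVertexDegree G ω k)
    (hω : IsRay G ω) : k ≠ 0 := by
  rintro rfl
  exact hdeg.2 ⟨fun _ => ω, fun _ => InEnd.self hω,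
    fun i j hij => (hij (Subsingleton.elim (α := Fin 1) i j)).elim⟩

theorem LiesIn.mono {ω : ℕ → V} {B B' : Set V} (h : LiesIn G ω B) (hB : B ⊆ B') :
    LiesIn G ω B' := fun r hr =>
  let ⟨m, hm⟩ := h r hr
  ⟨m, fun n hn => hB (hm n hn)⟩

theorem LiesIn.inter {ω : ℕ → V} {B B' : Set V} (h : LiesIn G ω B) (h' : LiesIn G ω B') :
    LiesIn G ω (B ∩ B') := fun r hr => by
  obtain ⟨m, hm⟩ := h r hr
  obtain ⟨m', hm'⟩ := h' r hr
  exact ⟨max m m', fun n hn => ⟨hm n (le_of_max_le_left hn), hm' n (le_of_max_le_right hn)⟩⟩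

section ReachableOutside

variable {S : Set V} {a b c : V}

theorem ReachableOutside.left_notMem (h : ReachableOutside G S a b) : a ∉ S :=
  let ⟨w, hw⟩ := h
  hw a w.start_mem_support

theorem ReachableOutside.of_adj (hab : G.Adj a b) (ha : a ∉ S) (hb : b ∉ S) :
    ReachableOutside G S a b :=
  ⟨hab.toWalk, by simp [ha, hb]⟩

theorem ReachableOutside.symm (h : ReachableOutside G S a b) : ReachableOutside G S b a :=
  let ⟨w, hw⟩ := h
  ⟨w.reverse, by simpa using hw⟩

theorem ReachableOutside.trans (hab : ReachableOutside G S a b) (hbc : ReachableOutside G S b c) :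
    ReachableOutside G S a c :=
  let ⟨w, hw⟩ := hab
  let ⟨w', hw'⟩ := hbc
  ⟨w.append w', fun v hv =>
    (SimpleGraph.Walk.mem_support_append_iff w w').1 hv |>.elim (hw v) (hw' v)⟩

theorem ConnectedIn.reachableOutside {s : Set V} (hs : ConnectedIn G s) (hsS : Disjoint s S)
    (ha : a ∈ s) (hb : b ∈ s) : ReachableOutside G S a b :=
  let ⟨w, hw⟩ := hs a ha b hb
  ⟨w, fun v hv => Set.disjoint_left.1 hsS (hw v hv)⟩

end ReachableOutside

def Fences (G : SimpleGraph V) (Y X : Set V) : Prop :=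
  ∀ u ∈ X, ∀ w, G.Adj u w → w ∈ X ∪ Y

section Fences

variable {X Y : Set V}

theorem Fences.mem_of_reachableOutside (hX : Fences G Y X) {a b : V} (ha : a ∈ X)
    (h : ReachableOutside G Y a b) : b ∈ X := by
  obtain ⟨w, hw⟩ := h
  induction w with
  | nil => exact ha
  | cons hadj p ih =>
    refine ih ((hX _ ha _ hadj).resolve_right (hw _ ?_)) fun v hv => hw v ?_ <;> simp_all

theorem Fences.compl_sdiff (hX : Fences G Y X) : Fences G Y (Xᶜ \ Y) := by
  intro u hu w hadj
  by_cases hw : w ∈ X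
  · exact absurd (hX w hw u hadj.symm) (by simpa using hu)
  · by_cases hwY : w ∈ Y <;> simp_all

theorem Fences.isSeparation (hX : Fences G Y X) : IsSeparation G (X ∪ Y) Xᶜ := by
  refine ⟨eq_univ_of_forall fun v => by by_cases v ∈ X <;> simp_all, fun a ha b hb hab => ?_⟩
  have haX : a ∈ X := by simpa using ha
  exact hb.2 (hX a haX b hab)

theorem Fences.ray_mem (hX : Fences G Y X) {r : ℕ → V} (hr : ∀ n, G.Adj (r n) (r (n + 1)))
    {m : ℕ} (hm : r m ∈ X) (hY : ∀ n ≥ m, r n ∉ Y) : ∀ n ≥ m, r n ∈ X := by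
  intro n hn
  induction n, hn using Nat.le_induction with
  | base => exact hm
  | succ n hmn ih => exact (hX _ ih _ (hr n)).resolve_right (hY _ (by omega))

theorem ConnectedIn.subset_of_fences {s : Set V} (hs : ConnectedIn G s) (hX : Fences G Y X)
    (hsY : Disjoint s Y) {a : V} (has : a ∈ s) (haX : a ∈ X) : s ⊆ X := fun _ hb =>
  hX.mem_of_reachableOutside haX (hs.reachableOutside hsY has hb)

theorem fences_setOf_reachableOutside (x : V) :
    Fences G Y {v | ReachableOutside G Y x v} := by
  intro u hu w hadj
  by_cases hw : w ∈ Y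
  · exact Or.inr hw
  · exact Or.inl (hu.trans (.of_adj hadj hu.symm.left_notMem hw))

variable {ω : ℕ → V}

theorem Fences.liesIn (hX : Fences G Y X) (hω : IsRay G ω) (hY : Y.Finite) {n : ℕ}
    (hn : ω n ∈ X) (hωY : ∀ m ≥ n, ω m ∉ Y) : LiesIn G ω X := by
  intro r hr
  obtain ⟨m, m', hrY, hωY', hreach⟩ := hr.2 Y hY
  have hm' : ω m' ∈ X := by
    by_contra hm'
    have hfar := hX.compl_sdiff.ray_mem hω.2 ⟨hm', hωY' m' le_rfl⟩ hωY' (max n m')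
      (le_max_right _ _)
    exact hfar.1 (hX.ray_mem hω.2 hn hωY (max n m') (le_max_left _ _))
  exact ⟨m, hX.ray_mem hr.1.2 (hX.mem_of_reachableOutside hm' hreach.symm) hrY⟩

theorem Fences.liesIn_or_liesIn_compl_sdiff (hX : Fences G Y X) (hω : IsRay G ω)
    (hY : Y.Finite) : LiesIn G ω X ∨ LiesIn G ω (Xᶜ \ Y) := by
  obtain ⟨n, hn⟩ := hω.1.exists_forall_notMem hY
  by_cases hnX : ω n ∈ X
  · exact Or.inl (hX.liesIn hω hY hnX hn)
  · exact Or.inr (hX.compl_sdiff.liesIn hω hY ⟨hnX, hn n le_rfl⟩ hn)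

end Fences

theorem IsSeparation.symm {C D : Set V} (h : IsSeparation G C D) : IsSeparation G D C :=
  ⟨union_comm C D ▸ h.1, fun a ha b hb hab => h.2 b hb a ha hab.symm⟩

theorem IsSeparation.fences {C D : Set V} (h : IsSeparation G C D) :
    Fences G (C ∩ D) (C \ D) := by
  intro u hu w hadj
  have hw : w ∈ C ∪ D := h.1 ▸ mem_univ w
  by_cases hwC : w ∈ C
  · by_cases hwD : w ∈ D <;> simp_all
  · exact absurd hadj (h.2 u hu w ⟨hw.resolve_left hwC, hwC⟩)

theorem IsSeparation.compl_sdiff {C D : Set V} (h : IsSeparation G C D) : (C \ D)ᶜ = D := by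
  ext v
  have hv : v ∈ C ∪ D := h.1 ▸ mem_univ v
  by_cases hvD : v ∈ D <;> simp_all

theorem IsSeparation.exists_ray_mem_inter {C D : Set V} (h : IsSeparation G C D) {r : ℕ → V}
    (hr : ∀ n, G.Adj (r n) (r (n + 1))) {m : ℕ} (hm : r m ∈ C \ D) (hD : ∃ m', ∀ n ≥ m', r n ∈ D) :
    ∃ n ≥ m, r n ∈ C ∩ D := by
  by_contra! hCD
  obtain ⟨m', hm'⟩ := hD
  exact (h.fences.ray_mem hr hm hCD (max m m') (le_max_left _ _)).2 (hm' _ (le_max_right _ _))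

theorem IsSeparation.subset_and_subset_of_sdiff_subset {A B C D : Set V}
    (hAB : IsSeparation G A B) (hnbr : ∀ v ∈ A ∩ B, ∃ u ∈ A \ B, G.Adj v u)
    (hCD : IsSeparation G C D) (h : A \ B ⊆ C \ D) : A ⊆ C ∧ D ⊆ B := by
  refine ⟨fun v hv => ?_, fun v hvD => ?_⟩
  · by_cases hvB : v ∈ B
    · obtain ⟨u, hu, huv⟩ := hnbr v ⟨hv, hvB⟩
      exact (hCD.fences u (h hu) v huv.symm).elim (·.1) (·.1)
    · exact (h ⟨hv, hvB⟩).1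
  · by_contra hvB
    exact (h ⟨(hAB.1 ▸ mem_univ v : v ∈ A ∪ B).resolve_right hvB, hvB⟩).2 hvD

theorem IsSeparation.le_encard_inter_of_disjointRays {ω : ℕ → V} {C D X : Set V}
    (h : IsSeparation G C D) (hD : LiesIn G ω D) {n : ℕ} {f : Fin n → ℕ → V}
    (hf : ∀ l, InEnd G ω (f l)) (hdisj : DisjointRays f) {N : Fin n → ℕ}
    (hN : ∀ l, f l (N l) ∈ C \ D) (hX : ∀ l, ∀ m ≥ N l, f l m ∈ X) :
    (n : ℕ∞) ≤ (C ∩ D ∩ X).encard := by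
  choose j hjN hj using fun l => h.exists_ray_mem_inter (hf l).1.2 (hN l) (hD (f l) (hf l))
  have hinj : Function.Injective fun l => f l (j l) := fun l l' he => by
    by_contra hne
    exact Set.disjoint_left.1 (hdisj hne) ⟨j l, rfl⟩ ⟨j l', he.symm⟩
  calc (n : ℕ∞) = ENat.card (Fin n) := by simp
    _ ≤ (range fun l => f l (j l)).encard := hinj.encard_range
    _ ≤ (C ∩ D ∩ X).encard :=
      encard_le_encard (range_subset_iff.2 fun l => ⟨hj l, hX l _ (hjN l)⟩)

theorem finite_setOf_notMem_of_reachableOutside {J : Set (Set V × Set V)} {x v : V} {Y : Set V}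
    (hJ : ∀ p ∈ J, IsSeparation G p.1 p.2 ∧ x ∈ p.1 \ p.2)
    (hdisj : J.PairwiseDisjoint fun p : Set V × Set V => (p.1 ∩ p.2) \ Y)
    (hv : ReachableOutside G Y x v) :
    {p ∈ J | v ∉ p.1}.Finite := by
  obtain ⟨w, hw⟩ := hv
  refine (w.support.finite_toSet.biUnion fun u _ => (hdisj.subsingleton_sep_mem u).finite).subset ?_
  rintro p ⟨hpJ, hvp⟩
  obtain ⟨u, hu, huS⟩ : ∃ u ∈ w.support, u ∈ p.1 ∩ p.2 := by
    by_contra! hS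
    exact hvp ((hJ p hpJ).1.fences.mem_of_reachableOutside (hJ p hpJ).2 ⟨w, hS⟩).1
  exact mem_biUnion hu ⟨hpJ, huS, hw u hu⟩

theorem Nested.symm {A B C D : Set V} (h : Nested C D A B) : Nested A B C D := by
  unfold Nested at *
  tauto

section Relevant

variable {ω : ℕ → V} {k : ℕ} {A B C D : Set V}

theorem Relevant.isSeparation (h : Relevant G ω k C D) : IsSeparation G C D := h.1

theorem Relevant.encard_inter (h : Relevant G ω k C D) : (C ∩ D).encard = k := h.2.1

theorem Relevant.connectedIn (h : Relevant G ω k C D) : ConnectedIn G (C \ D) := h.2.2.1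

theorem Relevant.exists_adj (h : Relevant G ω k C D) :
    ∀ v ∈ C ∩ D, ∃ u ∈ C \ D, G.Adj v u := h.2.2.2.1

theorem Relevant.liesIn (h : Relevant G ω k C D) : LiesIn G ω D := h.2.2.2.2.1

theorem Relevant.le_sepOrder (h : Relevant G ω k C D) {C' D' : Set V}
    (hsep : IsSeparation G C' D') (hC : C ⊆ C') (hD : LiesIn G ω D') : (k : ℕ∞) ≤ SepOrder C' D' :=
  not_lt.1 fun hlt => h.2.2.2.2.2 ⟨C', D', hsep, hlt, hC, hD⟩

theorem Relevant.finite_inter (h : Relevant G ω k C D) : (C ∩ D).Finite :=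
  finite_of_encard_eq_coe h.encard_inter

theorem Relevant.sdiff_nonempty (h : Relevant G ω k C D) (hk : k ≠ 0) : (C \ D).Nonempty := by
  obtain ⟨v, hv⟩ : (C ∩ D).Nonempty := by
    rw [← one_le_encard_iff_nonempty, h.encard_inter]
    exact_mod_cast Nat.one_le_iff_ne_zero.2 hk
  obtain ⟨u, hu, -⟩ := h.exists_adj v hv
  exact ⟨u, hu⟩

theorem Relevant.encard_lt (h : Relevant G ω k C D) {Y : Set V} (hY : Y ⊂ C ∩ D) :
    Y.encard < k :=
  h.encard_inter ▸ (h.finite_inter.subset hY.1).encard_lt_encard hY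

theorem Relevant.not_liesIn_compl_of_fences (h : Relevant G ω k C D) {X Y : Set V}
    (hX : Fences G Y X) (hY : Y ⊂ C ∩ D) (hC : C ⊆ X ∪ Y) : ¬ LiesIn G ω Xᶜ := fun hω =>
  lt_irrefl _ <| (h.le_sepOrder hX.isSeparation hC hω).trans_lt <|
    (encard_le_encard fun _ hv => hv.1.resolve_left hv.2).trans_lt (h.encard_lt hY)

theorem Relevant.subset_setOf_reachableOutside (h : Relevant G ω k C D) {Y : Set V}
    (hY : Y ⊆ C ∩ D) {x : V} (hx : x ∈ C \ D) : C ⊆ {v | ReachableOutside G Y x v} ∪ Y := by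
  have hCD : C \ D ⊆ {v | ReachableOutside G Y x v} := fun v hv =>
    h.connectedIn.reachableOutside (Set.disjoint_left.2 fun _ hu hY' => hu.2 (hY hY').2) hx hv
  intro v hv
  by_cases hvY : v ∈ Y
  · exact Or.inr hvY
  by_cases hvD : v ∈ D
  · obtain ⟨u, hu, hvu⟩ := h.exists_adj v ⟨hv, hvD⟩
    have hxu : ReachableOutside G Y x u := hCD hu
    exact Or.inl (hxu.trans (.of_adj hvu.symm hxu.symm.left_notMem hvY))
  · exact Or.inl (hCD ⟨hv, hvD⟩)

theorem Relevant.liesIn_setOf_reachableOutside (h : Relevant G ω k C D) (hω : IsRay G ω)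
    {Y : Set V} (hY : Y ⊂ C ∩ D) {x : V} (hx : x ∈ C \ D) :
    LiesIn G ω {v | ReachableOutside G Y x v} :=
  (fences_setOf_reachableOutside x).liesIn_or_liesIn_compl_sdiff hω
    (h.finite_inter.subset hY.1) |>.resolve_right fun hω' =>
      h.not_liesIn_compl_of_fences (fences_setOf_reachableOutside x) hY
        (h.subset_setOf_reachableOutside hY.1 hx) (hω'.mono sdiff_subset)

theorem Relevant.eq_of_inter_eq {C' D' : Set V} (h : Relevant G ω k C D)
    (h' : Relevant G ω k C' D') (hS : C ∩ D = C' ∩ D') {x : V} (hx : x ∈ C \ D)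
    (hx' : x ∈ C' \ D') : (C, D) = (C', D') := by
  have key : ∀ {C₁ D₁ C₂ D₂ : Set V}, Relevant G ω k C₁ D₁ → IsSeparation G C₂ D₂ →
      C₁ ∩ D₁ = C₂ ∩ D₂ → x ∈ C₁ \ D₁ → x ∈ C₂ \ D₂ → C₁ \ D₁ ⊆ C₂ \ D₂ :=
    fun h₁ h₂ hS hx₁ hx₂ => h₁.connectedIn.subset_of_fences h₂.fences
      (hS ▸ Set.disjoint_left.2 fun _ hv hv' => hv.2 hv'.2) hx₁ hx₂
  have hsdiff := (key h h'.isSeparation hS hx hx').antisymm (key h' h.isSeparation hS.symm hx' hx)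
  rw [Prod.mk.injEq, ← sdiff_union_inter C D, ← sdiff_union_inter C' D', hsdiff, hS,
    ← h.isSeparation.compl_sdiff, ← h'.isSeparation.compl_sdiff, hsdiff]
  exact ⟨rfl, rfl⟩

theorem Relevant.nested_of_disjoint (hAB : Relevant G ω k A B) (hk : k ≠ 0)
    (hCD : IsSeparation G C D) (h : Disjoint (A \ B) (C ∩ D)) : Nested A B C D := by
  obtain ⟨a, ha⟩ := hAB.sdiff_nonempty hk
  have haCD : a ∈ C ∪ D := hCD.1 ▸ mem_univ a
  by_cases haD : a ∈ D
  · have haC : a ∉ C := fun haC => Set.disjoint_left.1 h ha ⟨haC, haD⟩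
    have hsub := hAB.connectedIn.subset_of_fences hCD.symm.fences (inter_comm C D ▸ h) ha
      ⟨haD, haC⟩
    exact Or.inr (Or.inl
      (hAB.isSeparation.subset_and_subset_of_sdiff_subset hAB.exists_adj hCD.symm hsub))
  · have hsub := hAB.connectedIn.subset_of_fences hCD.fences h ha ⟨haCD.resolve_right haD, haD⟩
    exact Or.inl (hAB.isSeparation.subset_and_subset_of_sdiff_subset hAB.exists_adj hCD hsub)

theorem Relevant.inter_sdiff_nonempty_of_not_nested (hAB : Relevant G ω k A B) (hk : k ≠ 0)
    (hCD : IsSeparation G C D) (hn : ¬ Nested A B C D) : (A \ B ∩ (C ∩ D)).Nonempty :=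
  not_disjoint_iff_nonempty_inter.1 fun h => hn (hAB.nested_of_disjoint hk hCD h)

theorem Relevant.not_inter_subset_of_inter_sdiff_nonempty (hCD : Relevant G ω k C D)
    (hAB : IsSeparation G A B) (hB : LiesIn G ω B) (hy : (A \ B ∩ (C ∩ D)).Nonempty) :
    ¬ A ∩ B ⊆ C := by
  intro hsub
  obtain ⟨y, hyAB, hyCD⟩ := hy
  have hA : ∀ v, v ∉ B → v ∈ A := fun v hv => (hAB.1 ▸ mem_univ v : v ∈ A ∪ B).resolve_right hv
  -- `C ∩ D ∩ B`, a proper part of the separator of `(C, D)`, already separates `C` from the end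
  have hfence : Fences G (C ∩ D ∩ B) (C \ D ∪ A \ B) := by
    rintro u (hu | hu) w hadj
    · rcases hCD.isSeparation.fences u hu w hadj with hw | hw
      · exact Or.inl (Or.inl hw)
      · by_cases hwB : w ∈ B
        · exact Or.inr ⟨hw, hwB⟩
        · exact Or.inl (Or.inr ⟨hA w hwB, hwB⟩)
    · rcases hAB.fences u hu w hadj with hw | hw
      · exact Or.inl (Or.inr hw)
      · by_cases hwD : w ∈ D
        · exact Or.inr ⟨⟨hsub hw, hwD⟩, hw.2⟩
        · exact Or.inl (Or.inl ⟨hsub hw, hwD⟩)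
  refine hCD.not_liesIn_compl_of_fences hfence
    ⟨inter_subset_left, fun h => hyAB.2 (h hyCD).2⟩ (fun v hv => ?_)
    ((hB.inter hCD.liesIn).mono fun v hv h => h.elim (·.2 hv.2) (·.2 hv.1))
  by_cases hvD : v ∈ D
  · by_cases hvB : v ∈ B
    · exact Or.inr ⟨⟨hv, hvD⟩, hvB⟩
    · exact Or.inl (Or.inr ⟨hA v hvB, hvB⟩)
  · exact Or.inl (Or.inl ⟨hv, hvD⟩)

theorem Relevant.exists_mem_inter_notMem_of_not_nested (hAB : Relevant G ω k A B) (hk : k ≠ 0)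
    (hCD : Relevant G ω k C D) (hn : ¬ Nested A B C D) : ∃ z ∈ A ∩ B, z ∉ C :=
  not_subset.1 <| hCD.not_inter_subset_of_inter_sdiff_nonempty hAB.isSeparation hAB.liesIn
    (hAB.inter_sdiff_nonempty_of_not_nested hk hCD.isSeparation hn)

theorem Relevant.exists_mem_inter_mem_sdiff_of_not_nested (hAB : Relevant G ω k A B)
    (hk : k ≠ 0) (hCD : Relevant G ω k C D) (hn : ¬ Nested A B C D) : ∃ x ∈ A ∩ B, x ∈ C \ D :=
  let ⟨x, hxCD, hxAB⟩ :=
    hCD.inter_sdiff_nonempty_of_not_nested hk hAB.isSeparation fun h => hn h.symm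
  ⟨x, hxAB, hxCD⟩

theorem Relevant.encard_inter_inter_lt {X Y : Set V} (h : Relevant G ω k C D) (hY : Y ⊆ C ∩ D)
    (hYne : Y.Nonempty) (hXY : Disjoint X Y) : (C ∩ D ∩ X).encard < k := by
  have hle : (C ∩ D ∩ X).encard + Y.encard ≤ k := by
    rw [← encard_union_eq (hXY.mono_left inter_subset_right), ← h.encard_inter]
    exact encard_le_encard (union_subset inter_subset_left hY)
  have hfin : (C ∩ D ∩ X).encard ≠ ⊤ := (h.finite_inter.subset inter_subset_left).encard_lt_top.ne
  calc (C ∩ D ∩ X).encard < (C ∩ D ∩ X).encard + 1 := ENat.lt_add_one_iff hfin |>.2 le_rfl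
    _ ≤ (C ∩ D ∩ X).encard + Y.encard := by
      gcongr
      exact one_le_encard_iff_nonempty.2 hYne
    _ ≤ k := hle

theorem Relevant.reachableOutside_empty (h : Relevant G ω k C D) {x z : V} (hx : x ∈ C ∩ D)
    (hz : z ∈ C ∩ D) : ReachableOutside G ∅ x z := by
  obtain ⟨u, hu, hxu⟩ := h.exists_adj x hx
  obtain ⟨u', hu', hzu'⟩ := h.exists_adj z hz
  exact ((ReachableOutside.of_adj hxu (notMem_empty _) (notMem_empty _)).trans
    (h.connectedIn.reachableOutside (disjoint_empty _) hu hu')).trans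
      (.of_adj hzu'.symm (notMem_empty _) (notMem_empty _))

theorem false_of_crossing_sunflower (hω : IsRay G ω)
    (hdeg : EndVertexDegree G ω k) (hAB : Relevant G ω k A B) (hk : k ≠ 0) {x : V}
    (hx : x ∈ A ∩ B) {J : Set (Set V × Set V)} (hJ : J.Infinite)
    (hJrel : ∀ p ∈ J, (Relevant G ω k p.1 p.2 ∧ ¬ Nested A B p.1 p.2) ∧ x ∈ p.1 \ p.2)
    {Y : Set V} (hY : ∀ p ∈ J, Y ⊂ p.1 ∩ p.2)
    (hdisj : J.PairwiseDisjoint fun p : Set V × Set V => (p.1 ∩ p.2) \ Y) : False := by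
  have hfin : ∀ v, ReachableOutside G Y x v → {p ∈ J | v ∉ p.1}.Finite := fun v =>
    finite_setOf_notMem_of_reachableOutside
      (fun p hp => ⟨(hJrel p hp).1.1.isSeparation, (hJrel p hp).2⟩) hdisj
  rcases Y.eq_empty_or_nonempty with rfl | hYne
  · obtain ⟨z, hz, hzJ⟩ := hJ.exists_infinite_sep_of_finite hAB.finite_inter fun p hp =>
      hAB.exists_mem_inter_notMem_of_not_nested hk (hJrel p hp).1.1 (hJrel p hp).1.2
    exact hzJ (hfin z (hAB.reachableOutside_empty hx hz))
  · obtain ⟨p₀, hp₀⟩ := hJ.nonempty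
    have hωX : LiesIn G ω {v | ReachableOutside G Y x v} :=
      (hJrel p₀ hp₀).1.1.liesIn_setOf_reachableOutside hω (hY p₀ hp₀) (hJrel p₀ hp₀).2
    obtain ⟨f, hf, hfdisj⟩ := hdeg.1
    choose N hN using fun l => hωX (f l) (hf l)
    have hbad : (⋃ l, {p ∈ J | f l (N l) ∉ p.1} ∪ {p ∈ J | f l (N l) ∈ (p.1 ∩ p.2) \ Y}).Finite :=
      finite_iUnion fun l => (hfin _ (hN l _ le_rfl)).union (hdisj.subsingleton_sep_mem _).finite
    obtain ⟨p, hpJ, hp⟩ := (hJ.sdiff hbad).nonempty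
    have hstart : ∀ l, f l (N l) ∈ p.1 \ p.2 := fun l => by
      by_contra h
      refine hp (mem_iUnion.2 ⟨l, ?_⟩)
      by_cases h₁ : f l (N l) ∈ p.1
      · exact Or.inr ⟨hpJ, ⟨h₁, not_not.1 fun h₂ => h ⟨h₁, h₂⟩⟩, (hN l _ le_rfl).symm.left_notMem⟩
      · exact Or.inl ⟨hpJ, h₁⟩
    have hpRel := (hJrel p hpJ).1.1
    exact (hpRel.isSeparation.le_encard_inter_of_disjointRays hpRel.liesIn hf hfdisj hstart
      hN).not_gt (hpRel.encard_inter_inter_lt (hY p hpJ).1 hYne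
        (Set.disjoint_left.2 fun _ hv => hv.symm.left_notMem))

end Relevant

end

/-- each ω-relevant separation is nested with all but finitely many
ω-relevant separations. -/
theorem finitely_many_not_nested {V : Type} (G : SimpleGraph V) (ω : ℕ → V) (k : ℕ)
    (hω : IsRay G ω) (hdeg : EndVertexDegree G ω k)
    (A B : Set V) (hAB : Relevant G ω k A B) :
    {p : Set V × Set V | Relevant G ω k p.1 p.2 ∧ ¬ Nested A B p.1 p.2}.Finite := by
  have hk := hdeg.ne_zero hω
  by_contra hinf
  obtain ⟨x, hx, hJx⟩ := Set.Infinite.exists_infinite_sep_of_finite hinf hAB.finite_inter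
    fun p hp => hAB.exists_mem_inter_mem_sdiff_of_not_nested hk hp.1 hp.2
  obtain ⟨Y, J, hJsub, hJ, hYJ, hdisj⟩ := exists_infinite_sunflower_of_injOn k
    (fun p : Set V × Set V => p.1 ∩ p.2) hJx
    (fun p hp q hq hpq => hp.1.1.eq_of_inter_eq hq.1.1 hpq hp.2 hq.2)
    fun p hp => hp.1.1.encard_inter.le
  exact false_of_crossing_sunflower hω hdeg hAB hk hx hJ (fun p hp => hJsub hp) hYJ hdisj

end PaperEnds
end

section
/- Let G be a connected graph and ω an end of G having finite vertex degree. Then there are only finitely many vertices of G that dominate ω. -/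
open Set Cardinal

namespace PaperEnds

/-!
If infinitely many vertices dominate `ω`, one can grow any number `n` of disjoint paths in turn,
each ending in a dominating vertex `d`. To extend a path, follow a fan path from `d` to `ω` that
avoids the finitely many vertices used so far, then a tail segment of `ω`, then the reversed fan
path of a fresh dominating vertex `d'`. In the limit the paths become `n` disjoint rays, each
meeting `ω` infinitely often and hence lying in its end; for `n = k + 1` this contradicts the end
having vertex degree `k`.
-/

open SimpleGraph Function

variable {V : Type} {G : SimpleGraph V} {ω : ℕ → V}

theorem exists_forall_ge_notMem {r : ℕ → V} (hr : Injective r) {S : Set V} (hS : S.Finite) :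
    ∃ m, ∀ i, m ≤ i → r i ∉ S :=
  Filter.eventually_atTop.1 <| Nat.cofinite_eq_atTop ▸ hr.tendsto_cofinite.eventually
    hS.eventually_cofinite_notMem

theorem rayEquiv_of_frequently_mem_range {r : ℕ → V} (hr : IsRay G r) (hω : IsRay G ω)
    (hmeet : ∃ᶠ n in Filter.atTop, ω n ∈ range r) : RayEquiv G r ω := by
  intro S hS
  obtain ⟨m, hm⟩ := exists_forall_ge_notMem hr.1 hS
  obtain ⟨N, hN⟩ := exists_forall_ge_notMem hω.1 (hS.union ((finite_lt_nat m).image r))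
  obtain ⟨n, hNn, i, hi⟩ := Filter.frequently_atTop.1 hmeet N
  have hmi : m ≤ i := by
    by_contra! h
    exact hN n hNn (Or.inr ⟨i, h, hi⟩)
  refine ⟨i, n, fun i' hi' => hm i' (hmi.trans hi'),
    fun n' hn' h => hN n' (hNn.trans hn') (Or.inl h), Walk.nil.copy rfl hi, ?_⟩
  simpa using hm i hmi

theorem IsRay.inEnd_self (hω : IsRay G ω) : InEnd G ω ω :=
  ⟨hω, rayEquiv_of_frequently_mem_range hω hω (Filter.Frequently.of_forall mem_range_self)⟩

theorem exists_isRay_range_eq_of_isPrefix {L : ℕ → List V} (hpre : ∀ t, L t <+: L (t + 1))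
    (hchain : ∀ t, (L t).IsChain G.Adj) (hnodup : ∀ t, (L t).Nodup)
    (hgrow : ∀ t, ∃ t', (L t).length < (L t').length) :
    ∃ r, IsRay G r ∧ range r = {v | ∃ t, v ∈ L t} := by
  have hmono : ∀ ⦃s t⦄, s ≤ t → L s <+: L t := Nat.rel_of_forall_rel_succ_of_le _ hpre
  have hlen : ∀ n, ∃ t, n < (L t).length := by
    intro n
    induction n with
    | zero => obtain ⟨t, ht⟩ := hgrow 0; exact ⟨t, by omega⟩
    | succ n ih =>
      obtain ⟨t, ht⟩ := ih
      obtain ⟨t', ht'⟩ := hgrow t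
      exact ⟨t', by omega⟩
  choose T hT using hlen
  have hget : ∀ t n (h : n < (L t).length), (L t)[n] = (L (T n))[n]'(hT n) := fun t n h => by
    rw [(hmono (le_max_left t (T n))).getElem h, (hmono (le_max_right t (T n))).getElem (hT n)]
  have hlt : ∀ {n t}, T n ≤ t → n < (L t).length := fun h => (hT _).trans_le (hmono h).length_le
  refine ⟨fun n => (L (T n))[n]'(hT n), ⟨fun a b hab => ?_, fun n => ?_⟩, ?_⟩
  · have ha := hlt (le_max_left (T a) (T b))
    have hb := hlt (le_max_right (T a) (T b))
    dsimp only at hab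
    rwa [← hget _ a ha, ← hget _ b hb, (hnodup _).getElem_inj_iff] at hab
  · have hn : n < (L (T (n + 1))).length := by have := hT (n + 1); omega
    dsimp only
    rw [← hget _ n hn]
    exact List.isChain_iff_getElem.1 (hchain _) n (hT (n + 1))
  · ext v
    constructor
    · rintro ⟨n, rfl⟩
      exact ⟨T n, List.getElem_mem _⟩
    · rintro ⟨t, hv⟩
      obtain ⟨n, hn, rfl⟩ := List.getElem_of_mem hv
      exact ⟨n, (hget t n hn).symm⟩

theorem Dominates.notMem_range {v : V} (hv : Dominates G v ω) (hω : IsRay G ω) :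
    v ∉ range ω := by
  obtain ⟨t, P, ht, -, hPω, -⟩ := hv ω hω.inEnd_self
  intro hvω
  have h₀ := hPω 0 v (P 0).start_mem_support hvω
  have h₁ := hPω 1 v (P 1).start_mem_support hvω
  exact zero_ne_one (ht (hω.1 (h₀.symm.trans h₁)))

theorem Dominates.exists_path {v : V} (hv : Dominates G v ω) (hω : IsRay G ω) {F : Set V}
    (hF : F.Finite) (N : ℕ) :
    ∃ n, N ≤ n ∧ ∃ P : G.Walk v (ω n), P.IsPath ∧ (∀ u ∈ P.support, u ∈ range ω → u = ω n) ∧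
      ∀ u ∈ P.support, u ∈ F → u = v := by
  obtain ⟨t, P, ht, hP, hPω, hPv⟩ := hv ω hω.inEnd_self
  have hlow : (t ⁻¹' Iio N).Finite := (finite_Iio N).preimage ht.injOn
  -- a vertex other than `v` lies on at most one path of the fan
  have hmeet : {m | ∃ u ∈ F, u ≠ v ∧ u ∈ (P m).support}.Finite := by
    refine (hF.biUnion fun u _ => Subsingleton.finite (s := {m | u ≠ v ∧ u ∈ (P m).support})
      fun m₁ h₁ m₂ h₂ => ?_).subset fun m ⟨u, hu, h⟩ => mem_biUnion hu h
    by_contra hne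
    exact h₁.1 (hPv m₁ m₂ hne u h₁.2 h₂.2)
  obtain ⟨m, hm⟩ := (hlow.union hmeet).infinite_compl.nonempty
  simp only [mem_compl_iff, mem_union, mem_preimage, mem_Iio, mem_ofPred_eq, not_or, not_lt,
    not_exists, not_and] at hm
  refine ⟨t m, hm.1, P m, hP m, hPω m, fun u hu huF => ?_⟩
  by_contra hne
  exact hm.2 u huF hne hu

theorem isPath_append {u v w : V} {p : G.Walk u v} {q : G.Walk v w} (hp : p.IsPath)
    (hq : q.IsPath) (hpq : ∀ x ∈ p.support, x ∈ q.support → x = v) : (p.append q).IsPath := by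
  have hqn := q.cons_tail_support.symm ▸ hq.support_nodup
  rw [Walk.isPath_def, Walk.support_append]
  refine hp.support_nodup.append hqn.of_cons fun x hx hx' => ?_
  obtain rfl := hpq x hx (q.cons_tail_support ▸ List.mem_cons_of_mem _ hx')
  exact (List.nodup_cons.1 hqn).1 hx'

def walkAlong {r : ℕ → V} (hr : ∀ n, G.Adj (r n) (r (n + 1))) (a : ℕ) :
    (l : ℕ) → G.Walk (r a) (r (a + l))
  | 0 => .nil
  | l + 1 => (walkAlong hr a l).concat (hr (a + l))

theorem support_walkAlong {r : ℕ → V} (hr : ∀ n, G.Adj (r n) (r (n + 1))) (a l : ℕ) :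
    (walkAlong hr a l).support = (List.range' a (l + 1)).map r := by
  induction l with
  | zero => rfl
  | succ l ih => rw [walkAlong, Walk.support_concat, ih, List.range'_concat (n := l + 1)]; simp

theorem IsRay.isPath_walkAlong {r : ℕ → V} (hr : IsRay G r) (a l : ℕ) :
    (walkAlong hr.2 a l).IsPath := by
  rw [Walk.isPath_def, support_walkAlong]
  exact (List.nodup_range' ..).map hr.1

theorem mem_support_walkAlong {r : ℕ → V} {hr : ∀ n, G.Adj (r n) (r (n + 1))} {a l : ℕ} {x : V}
    (hx : x ∈ (walkAlong hr a l).support) : ∃ i, a ≤ i ∧ x = r i := by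
  rw [support_walkAlong] at hx
  obtain ⟨i, hi, rfl⟩ := List.mem_map.1 hx
  exact ⟨i, (List.mem_range'_1.1 hi).1, rfl⟩

theorem exists_path_through_ray {D : Set V} (hD : D.Infinite) (hdom : ∀ v ∈ D, Dominates G v ω)
    (hω : IsRay G ω) {d : V} (hd : d ∈ D) {F : Set V} (hF : F.Finite) (N : ℕ) :
    ∃ d' ∈ D, ∃ B : G.Walk d d', B.IsPath ∧ (∀ u ∈ B.support, u ∈ F → u = d) ∧
      ∃ n, N ≤ n ∧ ω n ∈ B.support := by
  obtain ⟨N₀, hN₀⟩ := exists_forall_ge_notMem hω.1 hF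
  obtain ⟨t, ht, P, hP, hPω, hPF⟩ := (hdom d hd).exists_path hω hF (max N N₀)
  have hF' : (F ∪ {u | u ∈ P.support}).Finite := hF.union P.support.finite_toSet
  obtain ⟨d', hd', hd'F⟩ := (hD.sdiff hF').nonempty
  obtain ⟨t', ht', Q, hQ, hQω, hQF⟩ := (hdom d' hd').exists_path hω hF' t
  obtain ⟨l, rfl⟩ := Nat.exists_eq_add_of_le ht'
  have hseg : ∀ x ∈ (walkAlong hω.2 t l).support, ∃ i, N₀ ≤ i ∧ x = ω i := fun x hx => by
    obtain ⟨i, hi, rfl⟩ := mem_support_walkAlong hx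
    exact ⟨i, (le_max_right N N₀).trans (ht.trans hi), rfl⟩
  have hQF' : ∀ u ∈ Q.reverse.support, u ∉ F ∪ {u | u ∈ P.support} := fun u hu hu' => by
    rw [Walk.support_reverse, List.mem_reverse] at hu
    exact hd'F (hQF u hu hu' ▸ hu')
  refine ⟨d', hd', P.append ((walkAlong hω.2 t l).append Q.reverse), isPath_append hP
    (isPath_append (hω.isPath_walkAlong t l) hQ.reverse fun x hx hx' => ?_) fun x hx hx' => ?_,
    fun u hu huF => ?_, t, le_of_max_le_left ht,
    P.support_subset_support_append_left _ P.end_mem_support⟩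
  · rw [Walk.support_reverse, List.mem_reverse] at hx'
    obtain ⟨i, -, rfl⟩ := mem_support_walkAlong hx
    exact hQω _ hx' (mem_range_self i)
  · rcases (Walk.mem_support_append_iff _ _).1 hx' with hx' | hx'
    · obtain ⟨i, -, rfl⟩ := mem_support_walkAlong hx'
      exact hPω _ hx (mem_range_self i)
    · exact absurd (Or.inr hx) (hQF' x hx')
  · simp only [Walk.mem_support_append_iff] at hu
    rcases hu with hu | hu | hu
    · exact hPF u hu huF
    · obtain ⟨i, hi, rfl⟩ := hseg u hu
      exact absurd huF (hN₀ i hi)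
    · exact absurd (Or.inl huF) (hQF' u hu)

/-- Paths are recorded by their vertex lists, so that extending one of them is concatenation. -/
def DisjointPathsEndingIn (G : SimpleGraph V) (D : Set V) {ι : Type} (s : ι → List V) : Prop :=
  (∀ i, ∃ a, ∃ d ∈ D, ∃ W : G.Walk a d, W.IsPath ∧ W.support = s i) ∧
  Pairwise fun i j => (s i).Disjoint (s j)

namespace DisjointPathsEndingIn

variable {D : Set V} {ι : Type} {s : ι → List V}

theorem isChain (hs : DisjointPathsEndingIn G D s) (i : ι) : (s i).IsChain G.Adj := by
  obtain ⟨a, d, -, W, -, hW⟩ := hs.1 i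
  exact hW ▸ W.isChain_adj_support

theorem nodup (hs : DisjointPathsEndingIn G D s) (i : ι) : (s i).Nodup := by
  obtain ⟨a, d, -, W, hW, hWs⟩ := hs.1 i
  exact hWs ▸ hW.support_nodup

theorem exists_extend [Finite ι] [DecidableEq ι] (hs : DisjointPathsEndingIn G D s)
    (hD : D.Infinite) (hdom : ∀ v ∈ D, Dominates G v ω) (hω : IsRay G ω) (j : ι) (N : ℕ) :
    ∃ l, (∃ n, N ≤ n ∧ ω n ∈ l) ∧ DisjointPathsEndingIn G D (update s j (s j ++ l)) := by
  obtain ⟨a, d, hd, W, hW, hWs⟩ := hs.1 j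
  have hF : (⋃ i, {u | u ∈ s i}).Finite := finite_iUnion fun i => (s i).finite_toSet
  obtain ⟨d', hd', B, hB, hBF, n, hn, hωn⟩ := exists_path_through_ray hD hdom hω hd hF N
  have hBs : ∀ i, ∀ u ∈ B.support, u ∈ s i → u = d := fun i u hu hui =>
    hBF u hu (mem_iUnion.2 ⟨i, hui⟩)
  have hdisj : ∀ i ≠ j, (s j ++ B.support.tail).Disjoint (s i) := by
    intro i hij u hu hui
    rcases List.mem_append.1 hu with hu | hu
    · exact hs.2 hij.symm hu hui
    · obtain rfl := hBs i u (List.mem_of_mem_tail hu) hui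
      exact hs.2 hij.symm (hWs ▸ W.end_mem_support) hui
  refine ⟨B.support.tail, ⟨n, hn, ?_⟩, fun i => ?_, fun i i' hii' => ?_⟩
  · rw [← B.cons_tail_support] at hωn
    exact (List.mem_cons.1 hωn).resolve_left
      fun h => (hdom d hd).notMem_range hω ⟨n, h⟩
  · rcases eq_or_ne i j with rfl | hij
    · refine ⟨a, d', hd', W.append B, isPath_append hW hB fun x hx hxB => ?_, ?_⟩
      · exact hBs i x hxB (hWs ▸ hx)
      · rw [update_self, Walk.support_append, hWs]
    · rw [update_of_ne hij]
      exact hs.1 i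
  · rcases eq_or_ne i j with rfl | hij
    · rw [update_self, update_of_ne hii'.symm]
      exact hdisj i' hii'.symm
    rcases eq_or_ne i' j with rfl | hi'j
    · rw [update_self, update_of_ne hij]
      exact (hdisj i hij).symm
    · rw [update_of_ne hij, update_of_ne hi'j]
      exact hs.2 hii'

end DisjointPathsEndingIn

theorem exists_seq_of_forall_exists {α : Type*} {P : α → Prop} {R : ℕ → α → α → Prop} {a : α}
    (ha : P a) (h : ∀ t x, P x → ∃ y, P y ∧ R t x y) :
    ∃ f : ℕ → α, ∀ t, P (f t) ∧ R t (f t) (f (t + 1)) := by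
  choose g hgP hgR using h
  let f : ℕ → {x // P x} := fun t => Nat.rec ⟨a, ha⟩ (fun t x => ⟨g t x x.2, hgP t x x.2⟩) t
  exact ⟨fun t => (f t).1, fun t => ⟨(f t).2, hgR t _ (f t).2⟩⟩

def ExtendsThroughRay (ω : ℕ → V) {ι : Type} [DecidableEq ι] (σ : ℕ → ι)
    (L : ℕ → ι → List V) : Prop :=
  ∀ t, ∃ l, (∃ n, t ≤ n ∧ ω n ∈ l) ∧ L (t + 1) = update (L t) (σ t) (L t (σ t) ++ l)

namespace ExtendsThroughRay

variable {ι : Type} [DecidableEq ι] {σ : ℕ → ι} {L : ℕ → ι → List V}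

theorem exists_append (hL : ExtendsThroughRay ω σ L) (t : ℕ) (j : ι) :
    ∃ l, L (t + 1) j = L t j ++ l ∧ (σ t = j → ∃ n, t ≤ n ∧ ω n ∈ l) := by
  obtain ⟨l, hl, h⟩ := hL t
  rw [h]
  rcases eq_or_ne (σ t) j with rfl | hj
  · exact ⟨l, update_self .., fun _ => hl⟩
  · exact ⟨[], by rw [update_of_ne hj.symm, List.append_nil], fun h => absurd h hj⟩

theorem isPrefix (hL : ExtendsThroughRay ω σ L) (j : ι) {s t : ℕ} (hst : s ≤ t) :
    L s j <+: L t j :=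
  Nat.rel_of_forall_rel_succ_of_le (fun l₁ l₂ : List V => l₁ <+: l₂)
    (fun t => (hL.exists_append t j).imp fun _ h => h.1.symm) hst

theorem exists_inEnd_range_eq (hL : ExtendsThroughRay ω σ L) (hω : IsRay G ω)
    (hσ : ∀ j N, ∃ t, N ≤ t ∧ σ t = j) (j : ι) (hchain : ∀ t, (L t j).IsChain G.Adj)
    (hnodup : ∀ t, (L t j).Nodup) :
    ∃ r, InEnd G ω r ∧ range r = {v | ∃ t, v ∈ L t j} := by
  have hgain : ∀ N, ∃ t, N ≤ t ∧ (L t j).length < (L (t + 1) j).length ∧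
      ∃ n, t ≤ n ∧ ω n ∈ L (t + 1) j := by
    intro N
    obtain ⟨t, hNt, rfl⟩ := hσ j N
    obtain ⟨l, h, hl⟩ := hL.exists_append t (σ t)
    obtain ⟨n, hn, hωn⟩ := hl rfl
    refine ⟨t, hNt, ?_, n, hn, h ▸ List.mem_append_right _ hωn⟩
    rw [h, List.length_append]
    have := List.length_pos_of_mem hωn
    omega
  obtain ⟨r, hr, hrange⟩ := exists_isRay_range_eq_of_isPrefix
    (fun t => hL.isPrefix j t.le_succ) hchain hnodup fun t => by
      obtain ⟨t', ht', hlt, -⟩ := hgain t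
      exact ⟨t' + 1, (hL.isPrefix j ht').length_le.trans_lt hlt⟩
  refine ⟨r, ⟨hr, rayEquiv_of_frequently_mem_range hr hω ?_⟩, hrange⟩
  rw [hrange, Filter.frequently_atTop]
  intro N
  obtain ⟨t, hNt, -, n, hn, hωn⟩ := hgain N
  exact ⟨n, hNt.trans hn, t + 1, hωn⟩

end ExtendsThroughRay

theorem exists_disjointRays_of_infinite_dominating (hω : IsRay G ω)
    (hD : {v | Dominates G v ω}.Infinite) (n : ℕ) [NeZero n] :
    ∃ f : Fin n → ℕ → V, (∀ i, InEnd G ω (f i)) ∧ DisjointRays f := by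
  set D := {v | Dominates G v ω}
  set e := hD.natEmbedding D
  have hinit : DisjointPathsEndingIn G D fun j : Fin n => [(e j : V)] := by
    refine ⟨fun j => ⟨_, _, (e j).2, Walk.nil, Walk.IsPath.nil, rfl⟩, fun i j hij => ?_⟩
    simpa [Subtype.ext_iff.symm, Fin.val_inj] using hij.symm
  obtain ⟨L, hL⟩ := exists_seq_of_forall_exists (P := DisjointPathsEndingIn G D)
    (R := fun t s s' => ∃ l, (∃ m, t ≤ m ∧ ω m ∈ l) ∧
      s' = update s (Fin.ofNat n t) (s (Fin.ofNat n t) ++ l))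
    hinit fun t s hs =>
      let ⟨l, hl, hs'⟩ := hs.exists_extend hD (fun _ hv => hv) hω (Fin.ofNat n t) t
      ⟨_, hs', l, hl, rfl⟩
  have hext : ExtendsThroughRay ω (Fin.ofNat n) L := fun t => (hL t).2
  have hσ : ∀ (j : Fin n) (N : ℕ), ∃ t, N ≤ t ∧ Fin.ofNat n t = j := fun j N => by
    refine ⟨j + n * N, ?_, Fin.ext ?_⟩
    · have := Nat.le_mul_of_pos_left N (NeZero.pos n)
      omega
    · simp [Nat.mod_eq_of_lt j.isLt]
  choose r hr using fun j => hext.exists_inEnd_range_eq hω hσ j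
    (fun t => (hL t).1.isChain j) (fun t => (hL t).1.nodup j)
  refine ⟨r, fun j => (hr j).1, fun i j hij => ?_⟩
  dsimp only
  rw [(hr i).2, (hr j).2, Set.disjoint_left]
  rintro u ⟨s, hs⟩ ⟨t, ht⟩
  exact (hL (max s t)).1.2 hij ((hext.isPrefix i (le_max_left s t)).subset hs)
    ((hext.isPrefix j (le_max_right s t)).subset ht)

theorem finitely_many_dominating_vertices_general {V : Type} (G : SimpleGraph V)
    (ω : ℕ → V) (hray : IsRay G ω)
    (hdeg : ∃ k : ℕ, EndVertexDegree G ω k) :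
    {v : V | Dominates G v ω}.Finite := by
  obtain ⟨k, -, hk⟩ := hdeg
  by_contra hinf
  exact hk (exists_disjointRays_of_infinite_dominating hray hinf (k + 1))

/-- in a connected graph, an end of finite vertex degree is dominated
by only finitely many vertices. -/
theorem finitely_many_dominating_vertices {V : Type} (G : SimpleGraph V)
    (hconn : G.Connected) (ω : ℕ → V) (hray : IsRay G ω)
    (hdeg : ∃ k : ℕ, EndVertexDegree G ω k) :
    {v : V | Dominates G v ω}.Finite :=
  finitely_many_dominating_vertices_general G ω hray hdeg

end PaperEnds
end
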